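/- arXiv:2002.04550 — 2 statements merged into one kernel-verified Lean document; each statement's English description precedes it below -/
import Mathlib

section
/- Let r ≥ 1 and let A₁, …, A_r be real n×n matrices. There exist real orthogonal n×n matrices Q₁, …, Q_r such that, with indices taken cyclically (Q_{r+1} := Q₁), the matrix Q₂ᵀ A₁ Q₁ is quasi-upper-triangular and Q_{i+1}ᵀ A_i Q_i is upper triangular for every i = 2, …, r. -/
/-!
Every endomorphism of a real vector space has an invariant subspace of dimension one or two,
spanned by `v` and `f v` for `v` in the kernel of `p(f)`, `p` an irreducible factor of the
minimal polynomial. Splitting it off orthogonally and inducting on the complement gives the real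
Schur form `Qᵀ A Q` of a single matrix.

If `A 1, …, A (r-1)` are invertible, let `Q 0` put the product `A (r-1) ⋯ A 1 A 0` in real Schur
form and walk backwards around the cycle with RQ decompositions `Q (i+1)ᵀ A i = R i Q iᵀ`. Then
`Q 1ᵀ A 0 Q 0 = U⁻¹ S` with `U = R (r-1) ⋯ R 1` invertible upper triangular and `S` the Schur form
of the product, and multiplying by an upper triangular matrix preserves quasi-triangularity.
In general, apply this to `A i + ε • 1` and let `ε → 0`: orthogonal matrices form a compact set
and the required shape is a closed condition.
-/

open Matrix

def QuasiUpperTriangular {n : ℕ} (T : Matrix (Fin n) (Fin n) ℝ) : Prop :=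
  (∀ i j : Fin n, (j : ℕ) + 1 < (i : ℕ) → T i j = 0) ∧
  ¬ ∃ (i : ℕ) (h1 : i + 1 < n) (h2 : i + 2 < n),
      T ⟨i + 1, h1⟩ ⟨i, Nat.lt_of_succ_lt h1⟩ ≠ 0 ∧ T ⟨i + 2, h2⟩ ⟨i + 1, h1⟩ ≠ 0

open Module Polynomial Filter Topology

section QuasiUpperTriangular

variable {n : ℕ}

theorem quasiUpperTriangular_iff {T : Matrix (Fin n) (Fin n) ℝ} :
    QuasiUpperTriangular T ↔ (∀ i j : Fin n, (j : ℕ) + 1 < (i : ℕ) → T i j = 0) ∧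
      ∀ (i : ℕ) (h1 : i + 1 < n) (h2 : i + 2 < n),
        T ⟨i + 1, h1⟩ ⟨i, Nat.lt_of_succ_lt h1⟩ * T ⟨i + 2, h2⟩ ⟨i + 1, h1⟩ = 0 := by
  simp only [QuasiUpperTriangular, not_exists, not_and_or, not_not, mul_eq_zero]

theorem QuasiUpperTriangular.of_le_two (hn : n ≤ 2) (T : Matrix (Fin n) (Fin n) ℝ) :
    QuasiUpperTriangular T :=
  quasiUpperTriangular_iff.2 ⟨fun i j h => by omega, fun i _ h2 => by omega⟩

theorem QuasiUpperTriangular.of_blocks {d m : ℕ} {T : Matrix (Fin (d + m)) (Fin (d + m)) ℝ}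
    (h₁ : QuasiUpperTriangular (T.submatrix (Fin.castAdd m) (Fin.castAdd m)))
    (h₂ : QuasiUpperTriangular (T.submatrix (Fin.natAdd d) (Fin.natAdd d)))
    (h₂₁ : ∀ i j, T (Fin.natAdd d i) (Fin.castAdd m j) = 0) :
    QuasiUpperTriangular T := by
  rw [quasiUpperTriangular_iff] at h₁ h₂ ⊢
  refine ⟨fun i j hij => ?_, fun i h1 h2 => ?_⟩
  · induction i using Fin.addCases <;> induction j using Fin.addCases
    · exact h₁.1 _ _ (by simpa using hij)
    · simp at hij; omega
    · exact h₂₁ _ _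
    · exact h₂.1 _ _ (by simp at hij; omega)
  · rcases lt_or_ge (i + 2) d with hi | hi
    · exact h₁.2 i (by omega) hi
    rcases lt_or_ge i d with hd | hd
    · -- one of the two entries is `T d (d - 1)`, which lies in the zero block
      rcases (by omega : d = i + 1 ∨ d = i + 2) with rfl | rfl
      · rw [show T ⟨i + 1, h1⟩ ⟨i, _⟩ = 0 from h₂₁ ⟨0, by omega⟩ ⟨i, by omega⟩, zero_mul]
      · rw [show T ⟨i + 2, h2⟩ ⟨i + 1, h1⟩ = 0 from h₂₁ ⟨0, by omega⟩ ⟨i + 1, by omega⟩, mul_zero]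
    · obtain ⟨k, rfl⟩ := Nat.exists_eq_add_of_le hd
      exact h₂.2 k (by omega) (by omega)

theorem QuasiUpperTriangular.isUpperTriangular_mul {U T : Matrix (Fin n) (Fin n) ℝ}
    (hU : U.IsUpperTriangular) (hT : QuasiUpperTriangular T) : QuasiUpperTriangular (U * T) := by
  rw [quasiUpperTriangular_iff] at hT ⊢
  have hsum : ∀ i j : Fin n, (U * T) i j =
      ∑ k ∈ Finset.univ.filter fun k : Fin n => (i : ℕ) ≤ k ∧ (k : ℕ) ≤ j + 1, U i k * T k j := by
    intro i j
    rw [mul_apply, Finset.sum_filter]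
    refine Finset.sum_congr rfl fun k _ => ?_
    split_ifs with hk
    · rfl
    rcases not_and_or.1 hk with hk | hk
    · rw [hU (show k < i by simp at hk; exact Fin.lt_def.2 hk), zero_mul]
    · rw [hT.1 k j (by omega), mul_zero]
  refine ⟨fun i j hij => ?_, fun i h1 h2 => ?_⟩
  · rw [hsum, Finset.sum_eq_zero]
    intro k hk
    simp at hk; omega
  · have hsub : ∀ (i : ℕ) (h1 : i + 1 < n), (U * T) ⟨i + 1, h1⟩ ⟨i, Nat.lt_of_succ_lt h1⟩ =
        U ⟨i + 1, h1⟩ ⟨i + 1, h1⟩ * T ⟨i + 1, h1⟩ ⟨i, Nat.lt_of_succ_lt h1⟩ := by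
      intro i h1
      rw [hsum, Finset.sum_eq_single_of_mem ⟨i + 1, h1⟩ (by simp)]
      intro k hk hki
      simp at hk; exact absurd (Fin.ext (by simp; omega)) hki
    rw [hsub, hsub i.succ h2]
    calc _ = U ⟨i + 1, h1⟩ ⟨i + 1, h1⟩ * U ⟨i + 2, h2⟩ ⟨i + 2, h2⟩ *
          (T ⟨i + 1, h1⟩ ⟨i, _⟩ * T ⟨i + 2, h2⟩ ⟨i + 1, h1⟩) := by ring
      _ = 0 := by rw [hT.2 i h1 h2, mul_zero]

theorem isClosed_setOf_quasiUpperTriangular :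
    IsClosed {T : Matrix (Fin n) (Fin n) ℝ | QuasiUpperTriangular T} := by
  simp only [quasiUpperTriangular_iff, Set.ofPred_and, Set.ofPred_forall]
  exact .inter
    (isClosed_iInter fun i => isClosed_iInter fun j => isClosed_iInter fun _ =>
      isClosed_eq (by fun_prop) continuous_const)
    (isClosed_iInter fun i => isClosed_iInter fun _ => isClosed_iInter fun _ =>
      isClosed_eq (by fun_prop) continuous_const)

end QuasiUpperTriangular

theorem Matrix.isClosed_setOf_blockTriangular {m α R : Type*} [LT α] [Zero R]
    [TopologicalSpace R] [T1Space R] (b : m → α) :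
    IsClosed {M : Matrix m m R | M.BlockTriangular b} := by
  simp only [BlockTriangular, Set.ofPred_forall]
  exact isClosed_iInter fun i => isClosed_iInter fun j => isClosed_iInter fun _ =>
    isClosed_singleton.preimage (continuous_id.matrix_elem i j)

theorem Matrix.isCompact_unitaryGroup {ι 𝕜 : Type*} [Fintype ι] [DecidableEq ι] [RCLike 𝕜] :
    IsCompact (unitaryGroup ι 𝕜 : Set (Matrix ι ι 𝕜)) :=
  (isCompact_univ_pi fun _ => isCompact_univ_pi fun _ => isCompact_closedBall (0 : 𝕜) 1)
    |>.of_isClosed_subset (isClosed_unitary (R := Matrix ι ι 𝕜)) fun _ hU i _ j _ => by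
      simpa using entry_norm_bound_of_unitary hU i j

theorem Matrix.eventually_isUnit_add_smul_one {ι 𝕜 : Type*} [Fintype ι] [DecidableEq ι]
    [Field 𝕜] [TopologicalSpace 𝕜] [T1Space 𝕜] (A : Matrix ι ι 𝕜) :
    ∀ᶠ ε in 𝓝[≠] (0 : 𝕜), IsUnit (A + ε • 1) := by
  filter_upwards [((-A).finite_spectrum.eventually_cofinite_notMem).filter_mono
    (nhdsNE_le_cofinite 0)] with ε hε
  rw [spectrum.notMem_iff, Algebra.algebraMap_eq_smul_one, sub_neg_eq_add, add_comm] at hε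
  exact hε

theorem Matrix.isUnit_transpose_of_mem_orthogonalGroup {ι R : Type*} [Fintype ι] [DecidableEq ι]
    [CommRing R] {P : Matrix ι ι R} (hP : P ∈ orthogonalGroup ι R) : IsUnit Pᵀ :=
  isUnit_iff_exists.2 ⟨P, (mem_orthogonalGroup_iff' _ _).1 hP, (mem_orthogonalGroup_iff _ _).1 hP⟩

theorem Module.End.exists_ne_zero_aeval_eq_zero_of_dvd_minpoly {K V : Type*} [Field K]
    [AddCommGroup V] [Module K V] [FiniteDimensional K V] {f : End K V} {p : K[X]}
    (hp : Irreducible p) (hdvd : p ∣ minpoly K f) : ∃ v ≠ 0, aeval f p v = 0 := by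
  by_contra! h
  obtain ⟨q, hq⟩ := hdvd
  have hμ : minpoly K f ≠ 0 := minpoly.ne_zero (Algebra.IsIntegral.isIntegral f)
  have hq0 : q ≠ 0 := by rintro rfl; simp at hq; exact hμ hq
  -- `p(f)` is injective, so `p(f) q(f) = μ(f) = 0` forces `q(f) = 0`, although `deg q < deg μ`
  have hfq : aeval f q = 0 := by
    ext v
    by_contra hv
    apply h _ hv
    rw [← Module.End.mul_apply, ← map_mul, ← hq, minpoly.aeval, LinearMap.zero_apply]
  have := natDegree_le_of_dvd (minpoly.dvd K f hfq) hq0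
  rw [hq, natDegree_mul hp.ne_zero hq0] at this
  have := hp.natDegree_pos
  omega

theorem Module.End.exists_mem_invtSubmodule_finrank_le_two {V : Type*} [AddCommGroup V]
    [Module ℝ V] [FiniteDimensional ℝ V] [Nontrivial V] (f : End ℝ V) :
    ∃ W ∈ f.invtSubmodule, W ≠ ⊥ ∧ finrank ℝ W ≤ 2 := by
  obtain ⟨p, hp, hdvd⟩ := exists_irreducible_of_degree_pos
    (minpoly.degree_pos (Algebra.IsIntegral.isIntegral (R := ℝ) f))
  obtain ⟨v, hv, hpv⟩ := exists_ne_zero_aeval_eq_zero_of_dvd_minpoly hp hdvd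
  -- `f² v` is the value at `v` of the remainder of `X²` modulo `p`, which has degree `≤ 1`
  have hff : f (f v) ∈ Submodule.span ℝ {v, f v} := by
    set s := X ^ 2 % p
    have hs : natDegree s ≤ 1 := by
      have := (degree_mod_lt (X ^ 2 : ℝ[X]) hp.ne_zero).trans_le hp.degree_le_two
      exact natDegree_le_of_degree_le (Order.le_of_lt_succ this)
    have : f (f v) = aeval f s v := calc
      f (f v) = aeval f (X ^ 2 / p * p + s) v := by
        rw [mul_comm, EuclideanDomain.div_add_mod]; simp [pow_two]
      _ = aeval f s v := by simp [hpv]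
    rw [this, eq_X_add_C_of_natDegree_le_one hs]
    simp only [map_add, map_mul, aeval_C, aeval_X, LinearMap.add_apply, Module.End.mul_apply,
      Module.algebraMap_end_apply]
    exact Submodule.add_mem _ (Submodule.smul_mem _ _ (Submodule.subset_span (by simp)))
      (Submodule.smul_mem _ _ (Submodule.subset_span (by simp)))
  refine ⟨Submodule.span ℝ {v, f v}, ?_, ?_, ?_⟩
  · rw [Module.End.mem_invtSubmodule, Submodule.span_le]
    rintro _ (rfl | rfl)
    · exact Submodule.subset_span (by simp)
    · exact hff
  · simp [hv]
  · classical
    exact (finrank_span_le_card ({v, f v} : Set V)).trans (by simpa using Finset.card_le_two)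

theorem Orthonormal.append {𝕜 E : Type*} [RCLike 𝕜] [NormedAddCommGroup E] [InnerProductSpace 𝕜 E]
    {d m : ℕ} {u : Fin d → E} {v : Fin m → E} (hu : Orthonormal 𝕜 u) (hv : Orthonormal 𝕜 v)
    (huv : ∀ i j, inner 𝕜 (u i) (v j) = 0) : Orthonormal 𝕜 (Fin.append u v) := by
  classical
  rw [orthonormal_iff_ite] at hu hv ⊢
  intro i j
  induction i using Fin.addCases <;> induction j using Fin.addCases
  · simp [hu]
  · simp [huv, Fin.ext_iff]; omega
  · simp [inner_eq_zero_symm.1 (huv _ _), Fin.ext_iff]; omega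
  · simp [hv]

theorem LinearMap.exists_orthonormal_quasiUpperTriangular {E : Type*} [NormedAddCommGroup E]
    [InnerProductSpace ℝ E] [FiniteDimensional ℝ E] (f : E →ₗ[ℝ] E) {n : ℕ}
    (hn : finrank ℝ E = n) :
    ∃ b : Fin n → E, Orthonormal ℝ b ∧
      QuasiUpperTriangular (Matrix.of fun i j => inner ℝ (b i) (f (b j))) := by
  induction n using Nat.strong_induction_on generalizing E with
  | _ n ih =>
  rcases Nat.eq_zero_or_pos n with rfl | hn0
  · exact ⟨Fin.elim0, ⟨fun i => i.elim0, fun i => i.elim0⟩, .of_le_two (by norm_num) _⟩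
  have : Nontrivial E := nontrivial_of_finrank_pos (hn ▸ hn0)
  obtain ⟨W, hWf, hW0, hW2⟩ := Module.End.exists_mem_invtSubmodule_finrank_le_two f
  obtain rfl : finrank ℝ W + finrank ℝ Wᗮ = n := hn ▸ W.finrank_add_finrank_orthogonal
  obtain ⟨c, hc, hcT⟩ := ih (finrank ℝ Wᗮ)
    (by have := mt Submodule.finrank_eq_zero.1 hW0; omega)
    (Wᗮ.orthogonalProjectionOnto ∘ₗ f ∘ₗ Wᗮ.subtype) rfl
  set w := stdOrthonormalBasis ℝ W
  refine ⟨Fin.append (fun i => (w i : E)) (fun j => (c j : E)),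
    (w.orthonormal.comp_linearIsometry W.subtypeₗᵢ).append (hc.comp_linearIsometry Wᗮ.subtypeₗᵢ)
      fun i j => W.inner_right_of_mem_orthogonal (w i).2 (c j).2,
    .of_blocks (.of_le_two hW2 _) ?_ fun i j => ?_⟩
  · convert hcT using 1
    ext i j
    simp
  · simpa using W.inner_left_of_mem_orthogonal (hWf (w j).2) (c i).2

theorem Matrix.of_ofLp_mul_apply {ι m κ : Type*} [Fintype m] (v : ι → EuclideanSpace ℝ m)
    (X : Matrix m κ ℝ) (i : ι) (j : κ) :
    (of (fun i => WithLp.ofLp (v i)) * X) i j = inner ℝ (v i) (WithLp.toLp 2 (Xᵀ j)) := by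
  simp [mul_apply, PiLp.inner_apply, mul_comm]

section Orthogonal

variable {ι : Type*} [Fintype ι]

theorem Orthonormal.transpose_of_ofLp_mem_orthogonalGroup [DecidableEq ι]
    {v : ι → EuclideanSpace ℝ ι} (hv : Orthonormal ℝ v) :
    (of fun i => WithLp.ofLp (v i))ᵀ ∈ orthogonalGroup ι ℝ := by
  rw [mem_orthogonalGroup_iff', transpose_transpose]
  ext i j
  rw [of_ofLp_mul_apply, transpose_transpose, one_apply]
  exact orthonormal_iff_ite.1 hv i j

theorem Matrix.exists_orthogonal_quasiUpperTriangular {n : ℕ} (A : Matrix (Fin n) (Fin n) ℝ) :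
    ∃ Q ∈ orthogonalGroup (Fin n) ℝ, QuasiUpperTriangular (Qᵀ * A * Q) := by
  obtain ⟨v, hv, hT⟩ := (toEuclideanLin A).exists_orthonormal_quasiUpperTriangular
    (finrank_euclideanSpace_fin)
  refine ⟨_, hv.transpose_of_ofLp_mem_orthogonalGroup, ?_⟩
  convert hT using 1
  ext i j
  rw [transpose_transpose, Matrix.mul_assoc, of_ofLp_mul_apply]
  congr

theorem Matrix.exists_isUpperTriangular_mul_transpose [LinearOrder ι] [LocallyFiniteOrderTop ι]
    (M : Matrix ι ι ℝ) :
    ∃ Q ∈ orthogonalGroup ι ℝ, ∃ R : Matrix ι ι ℝ, R.IsUpperTriangular ∧ M = R * Qᵀ := by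
  -- Gram–Schmidt applied to the rows of `M`, from the last one to the first
  set v := InnerProductSpace.gramSchmidtOrthonormalBasis (𝕜 := ℝ) (ι := ιᵒᵈ) (by simp)
    fun i => WithLp.toLp 2 (M (OrderDual.ofDual i))
  set u : ι → EuclideanSpace ℝ ι := fun i => v (OrderDual.toDual i)
  have hu : Orthonormal ℝ u := v.orthonormal.comp _ OrderDual.toDual.injective
  have hQ := hu.transpose_of_ofLp_mem_orthogonalGroup
  refine ⟨_, hQ, M * (of fun i => WithLp.ofLp (u i))ᵀ, fun i j hji => ?_, ?_⟩
  · rw [← transpose_apply (M * _), transpose_mul, transpose_transpose, of_ofLp_mul_apply]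
    exact InnerProductSpace.gramSchmidtOrthonormalBasis_inv_triangular _ _
      (show OrderDual.toDual i < OrderDual.toDual j from hji)
  · rw [Matrix.mul_assoc, (mem_orthogonalGroup_iff _ _).1 hQ, Matrix.mul_one]

end Orthogonal

theorem mul_prod_range_eq_prod_range_mul {M : Type*} [Monoid M] {p a r : ℕ → M}
    (h : ∀ k, p k * a k = r k * p (k + 1)) (k : ℕ) :
    p 0 * ((List.range k).map a).prod = ((List.range k).map r).prod * p k := by
  induction k with
  | zero => simp
  | succ k ih =>
    simp only [List.range_succ, List.map_append, List.prod_append, List.map_cons, List.map_nil,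
      List.prod_cons, List.prod_nil, _root_.mul_one]
    rw [← _root_.mul_assoc, ih, _root_.mul_assoc, h, _root_.mul_assoc]

theorem Nat.sub_add_one_mod_mod {r i : ℕ} (hi : i < r) : (r - (i + 1) % r) % r = r - 1 - i := by
  rcases (by omega : i + 1 = r ∨ i + 1 < r) with h | h
  · rw [h, Nat.mod_self, Nat.sub_zero, Nat.mod_self]; omega
  · rw [Nat.mod_eq_of_lt h, Nat.mod_eq_of_lt (by omega)]; omega

section PeriodicSchur

variable {n r : ℕ}

theorem exists_orthogonal_transpose_mul_eq_isUpperTriangular_mul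
    (A : ℕ → Matrix (Fin n) (Fin n) ℝ) {P₀ : Matrix (Fin n) (Fin n) ℝ}
    (hP₀ : P₀ ∈ orthogonalGroup (Fin n) ℝ) :
    ∃ P R : ℕ → Matrix (Fin n) (Fin n) ℝ, P 0 = P₀ ∧ (∀ k, P k ∈ orthogonalGroup (Fin n) ℝ) ∧
      (∀ k, (R k).IsUpperTriangular) ∧ ∀ k, (P k)ᵀ * A k = R k * (P (k + 1))ᵀ := by
  choose q hq R hR hqR using fun M : Matrix (Fin n) (Fin n) ℝ =>
    M.exists_isUpperTriangular_mul_transpose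
  let P : ℕ → Matrix (Fin n) (Fin n) ℝ := fun k => Nat.rec P₀ (fun k Pk => q (Pkᵀ * A k)) k
  refine ⟨P, fun k => R ((P k)ᵀ * A k), rfl, fun k => ?_, fun k => hR _, fun k => hqR _⟩
  cases k
  exacts [hP₀, hq _]

def PeriodicSchurForm (hr : 1 ≤ r) (A Q : Fin r → Matrix (Fin n) (Fin n) ℝ) : Prop :=
  QuasiUpperTriangular ((Q ⟨1 % r, Nat.mod_lt _ hr⟩)ᵀ * A ⟨0, hr⟩ * Q ⟨0, hr⟩) ∧
    ∀ i : Fin r, i ≠ ⟨0, hr⟩ →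
      ((Q ⟨((i : ℕ) + 1) % r, Nat.mod_lt _ hr⟩)ᵀ * A i * Q i).IsUpperTriangular

theorem exists_periodicSchurForm_of_isUnit (hr : 1 ≤ r)
    (A : Fin r → Matrix (Fin n) (Fin n) ℝ) (hA : ∀ i, i ≠ ⟨0, hr⟩ → IsUnit (A i)) :
    ∃ Q, (∀ i, Q i ∈ orthogonalGroup (Fin n) ℝ) ∧ PeriodicSchurForm hr A Q := by
  -- the chain `P` runs backwards around the cycle from `P 0 = Q 0`: `P k` becomes `Q (r - k)`
  set B : ℕ → Matrix (Fin n) (Fin n) ℝ := fun k => A ⟨r - 1 - k, by omega⟩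
  set C := ((List.range (r - 1)).map B).prod
  obtain ⟨P₀, hP₀, hS⟩ := (C * A ⟨0, hr⟩).exists_orthogonal_quasiUpperTriangular
  obtain ⟨P, R, rfl, hP, hR, hPR⟩ := exists_orthogonal_transpose_mul_eq_isUpperTriangular_mul B hP₀
  set U := ((List.range (r - 1)).map R).prod
  have hCU : (P 0)ᵀ * C = U * (P (r - 1))ᵀ := mul_prod_range_eq_prod_range_mul hPR (r - 1)
  have hU : IsUnit U.det := by
    rw [← isUnit_iff_isUnit_det]
    refine isUnit_of_mul_isUnit_left (hCU ▸ (isUnit_transpose_of_mem_orthogonalGroup hP₀).mul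
      (List.prod_isUnit ?_))
    simp only [List.mem_map, List.mem_range]
    rintro _ ⟨k, hk, rfl⟩
    exact hA _ (by simp [Fin.ext_iff]; omega)
  have hUT : U.IsUpperTriangular := List.prod_induction _ (fun _ _ => BlockTriangular.mul)
    blockTriangular_one (by simpa using fun k _ => hR k)
  refine ⟨fun i => P ((r - i) % r), fun i => hP _, ?_, fun i hi => ?_⟩
  · have h1 : (r - 1 % r) % r = r - 1 := by simpa using Nat.sub_add_one_mod_mod hr
    have : Invertible U := U.invertibleOfIsUnitDet hU
    have hSU : (P (r - 1))ᵀ * A ⟨0, hr⟩ * P 0 = U⁻¹ * ((P 0)ᵀ * (C * A ⟨0, hr⟩) * P 0) := by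
      rw [← Matrix.mul_assoc (P 0)ᵀ, hCU, Matrix.mul_assoc U, Matrix.mul_assoc U,
        inv_mul_cancel_left_of_invertible, Matrix.mul_assoc]
    show QuasiUpperTriangular ((P ((r - 1 % r) % r))ᵀ * A ⟨0, hr⟩ * P ((r - 0) % r))
    rw [h1, Nat.sub_zero, Nat.mod_self, hSU]
    exact hS.isUpperTriangular_mul (blockTriangular_inv_of_blockTriangular hUT)
  · have hi0 : (i : ℕ) ≠ 0 := fun h => hi (Fin.ext h)
    have hAi : A i = B (r - 1 - i) := congrArg A (Fin.ext (by simp; omega))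
    show ((P ((r - ((i : ℕ) + 1) % r) % r))ᵀ * A i * P ((r - i) % r)).IsUpperTriangular
    rw [Nat.sub_add_one_mod_mod i.2, Nat.mod_eq_of_lt (by omega : r - i < r),
      show r - (i : ℕ) = r - 1 - i + 1 by omega, hAi, hPR, Matrix.mul_assoc,
      (mem_orthogonalGroup_iff' _ _).1 (hP _), Matrix.mul_one]
    exact hR _

theorem isClosed_setOf_periodicSchurForm (hr : 1 ≤ r) :
    IsClosed {p : (Fin r → Matrix (Fin n) (Fin n) ℝ) × (Fin r → Matrix (Fin n) (Fin n) ℝ) |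
      PeriodicSchurForm hr p.1 p.2} := by
  simp only [PeriodicSchurForm, Set.ofPred_and, Set.ofPred_forall]
  exact .inter (isClosed_setOf_quasiUpperTriangular.preimage (by fun_prop))
    (isClosed_iInter fun i => isClosed_iInter fun _ =>
      (isClosed_setOf_blockTriangular id).preimage (by fun_prop))

theorem isClosed_setOf_exists_periodicSchurForm (hr : 1 ≤ r) :
    IsClosed {A : Fin r → Matrix (Fin n) (Fin n) ℝ |
      ∃ Q, (∀ i, Q i ∈ orthogonalGroup (Fin n) ℝ) ∧ PeriodicSchurForm hr A Q} := by
  -- the projection along the compact factor `(orthogonalGroup)ʳ` is a closed map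
  have : CompactSpace (orthogonalGroup (Fin n) ℝ) :=
    isCompact_iff_compactSpace.1 isCompact_unitaryGroup
  convert isClosedMap_fst_of_compactSpace _ ((isClosed_setOf_periodicSchurForm hr).preimage
    (f := fun p : (Fin r → Matrix (Fin n) (Fin n) ℝ) × (Fin r → orthogonalGroup (Fin n) ℝ) =>
      (p.1, fun i => (p.2 i : Matrix (Fin n) (Fin n) ℝ))) (by fun_prop))
  ext A
  constructor
  · rintro ⟨Q, hQ, h⟩
    exact ⟨(A, fun i => ⟨Q i, hQ i⟩), h, rfl⟩
  · rintro ⟨⟨A, Q⟩, h, rfl⟩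
    exact ⟨_, fun i => (Q i).2, h⟩

end PeriodicSchur

/-- Real periodic Schur decomposition: for matrices `A 0, …, A (r-1)` associated with a cycle
there are orthogonal matrices `Q 0, …, Q (r-1)` (indices taken cyclically) such that the first
reduced matrix is quasi-upper-triangular and the remaining ones are upper triangular. -/
theorem real_periodic_schur_decomposition (n r : ℕ) (hr : 1 ≤ r)
    (A : Fin r → Matrix (Fin n) (Fin n) ℝ) :
    ∃ Q : Fin r → Matrix (Fin n) (Fin n) ℝ,
      (∀ i, (Q i)ᵀ * Q i = 1) ∧
      QuasiUpperTriangular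
        ((Q ⟨1 % r, Nat.mod_lt _ hr⟩)ᵀ * A ⟨0, hr⟩ * Q ⟨0, hr⟩) ∧
      ∀ i : Fin r, i ≠ ⟨0, hr⟩ → ∀ p q : Fin n, q < p →
        ((Q ⟨((i : ℕ) + 1) % r, Nat.mod_lt _ hr⟩)ᵀ * A i * Q i) p q = 0 := by
  have hlim : Tendsto (fun ε : ℝ => fun i => A i + ε • 1) (𝓝[≠] 0) (𝓝 A) :=
    tendsto_nhdsWithin_of_tendsto_nhds (by simpa using (by fun_prop :
      Continuous fun ε : ℝ => fun i => A i + ε • (1 : Matrix (Fin n) (Fin n) ℝ)).tendsto 0)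
  have hgood : ∀ᶠ ε in 𝓝[≠] (0 : ℝ), (fun i => A i + ε • 1) ∈
      {B | ∃ Q, (∀ i, Q i ∈ orthogonalGroup (Fin n) ℝ) ∧ PeriodicSchurForm hr B Q} := by
    filter_upwards [eventually_all.2 fun i => (A i).eventually_isUnit_add_smul_one] with ε hε
    exact exists_periodicSchurForm_of_isUnit hr _ fun i _ => hε i
  obtain ⟨Q, hQ, hform⟩ := (isClosed_setOf_exists_periodicSchurForm hr).mem_of_tendsto hlim hgood
  exact ⟨Q, fun i => (mem_orthogonalGroup_iff' _ _).1 (hQ i), hform⟩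
end

section
/- For every pair of complex n×n matrices A and B there exist unitary n×n matrices U₁ and U₂ such that U₂ᴴ A U₁ and U₁ᴴ B U₂ are both upper triangular. -/
/-!
Induct on `n`. If `x` is an eigenvector of `B * A`, the lines `ℂ x` and `ℂ (A x)` are mapped into
each other by `A` and `B`; when `A x = 0`, replace `A x` by any `y ≠ 0` with `B y ∈ ℂ x`, which
exists because `B` followed by the quotient map onto `ℂⁿ ⧸ ℂ x` cannot be injective. Unitaries `V₁`,
`V₂` whose first columns span these lines make the first columns of `V₂ᴴ A V₁` and `V₁ᴴ B V₂` vanish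
below the diagonal, and the trailing blocks are triangularised by induction, lifted back through
`diag(1, W)`.
-/

open Matrix

theorem LinearMap.exists_map_span_singleton_le_pair {K V W : Type*} [Field K] [IsAlgClosed K]
    [AddCommGroup V] [Module K V] [FiniteDimensional K V] [Nontrivial V]
    [AddCommGroup W] [Module K W] [FiniteDimensional K W]
    (hVW : Module.finrank K V ≤ Module.finrank K W) (f : V →ₗ[K] W) (g : W →ₗ[K] V) :
    ∃ x ≠ 0, ∃ y ≠ 0, (K ∙ x).map f ≤ K ∙ y ∧ (K ∙ y).map g ≤ K ∙ x := by
  simp only [Submodule.map_span_le, Set.mem_singleton_iff, forall_eq]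
  obtain ⟨μ, hμ⟩ := Module.End.exists_eigenvalue (g ∘ₗ f)
  obtain ⟨x, hx⟩ := hμ.exists_hasEigenvector
  by_cases hfx : f x = 0
  · have hker : LinearMap.ker ((K ∙ x).mkQ ∘ₗ g) ≠ ⊥ := by
      apply LinearMap.ker_ne_bot_of_finrank_lt
      have := Submodule.finrank_quotient_add_finrank (K ∙ x)
      rw [finrank_span_singleton hx.2] at this
      omega
    obtain ⟨y, hy, hy0⟩ := Submodule.exists_mem_ne_zero_of_ne_bot hker
    refine ⟨x, hx.2, y, hy0, by simp [hfx], ?_⟩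
    simpa [Submodule.Quotient.mk_eq_zero] using hy
  · refine ⟨x, hx.2, f x, hfx, Submodule.mem_span_singleton_self _, ?_⟩
    rw [← LinearMap.comp_apply, hx.apply_eq_smul]
    exact Submodule.smul_mem _ _ (Submodule.mem_span_singleton_self _)

namespace Matrix

variable {R : Type*} {n : ℕ}

def blockDiagOne [Zero R] [One R] (W : Matrix (Fin n) (Fin n) R) :
    Matrix (Fin (n + 1)) (Fin (n + 1)) R :=
  of (Fin.cons (Fin.cons 1 0) fun i => Fin.cons 0 (W i))

section Apply

variable [Zero R] [One R] (W : Matrix (Fin n) (Fin n) R) (i j : Fin n)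

@[simp] theorem blockDiagOne_zero_zero : blockDiagOne W 0 0 = 1 := rfl
@[simp] theorem blockDiagOne_zero_succ : blockDiagOne W 0 j.succ = 0 := rfl
@[simp] theorem blockDiagOne_succ_zero : blockDiagOne W i.succ 0 = 0 := rfl
@[simp] theorem blockDiagOne_succ_succ : blockDiagOne W i.succ j.succ = W i j := rfl

end Apply

theorem star_blockDiagOne [Semiring R] [StarRing R] (W : Matrix (Fin n) (Fin n) R) :
    star (blockDiagOne W) = blockDiagOne (star W) := by
  ext i j
  induction i using Fin.cases <;> induction j using Fin.cases <;> simp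

theorem blockDiagOne_mul [Semiring R] (X Y : Matrix (Fin n) (Fin n) R) :
    blockDiagOne X * blockDiagOne Y = blockDiagOne (X * Y) := by
  ext i j
  induction i using Fin.cases <;> induction j using Fin.cases <;>
    simp [mul_apply, Fin.sum_univ_succ]

theorem blockDiagOne_one [Semiring R] : blockDiagOne (1 : Matrix (Fin n) (Fin n) R) = 1 := by
  ext i j
  induction i using Fin.cases <;> induction j using Fin.cases <;>
    simp [one_apply, (Fin.succ_ne_zero _).symm]

theorem blockDiagOne_mem_unitaryGroup [CommRing R] [StarRing R] {W : Matrix (Fin n) (Fin n) R}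
    (hW : W ∈ unitaryGroup (Fin n) R) : blockDiagOne W ∈ unitaryGroup (Fin (n + 1)) R := by
  rw [mem_unitaryGroup_iff', star_blockDiagOne, blockDiagOne_mul,
    mem_unitaryGroup_iff'.mp hW, blockDiagOne_one]

theorem blockDiagOne_mul_mul_apply_succ_zero [Semiring R] (X Y : Matrix (Fin n) (Fin n) R)
    (M : Matrix (Fin (n + 1)) (Fin (n + 1)) R) (i : Fin n) :
    (blockDiagOne X * M * blockDiagOne Y) i.succ 0 = ∑ k, X i k * M k.succ 0 := by
  simp [mul_apply, Fin.sum_univ_succ, Finset.sum_mul]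

theorem submatrix_succ_blockDiagOne_mul_mul [Semiring R] (X Y : Matrix (Fin n) (Fin n) R)
    (M : Matrix (Fin (n + 1)) (Fin (n + 1)) R) :
    (blockDiagOne X * M * blockDiagOne Y).submatrix Fin.succ Fin.succ =
      X * M.submatrix Fin.succ Fin.succ * Y := by
  ext i j
  simp [mul_apply, Fin.sum_univ_succ, Finset.sum_mul]

theorem isUpperTriangular_of_submatrix_succ [Zero R] {M : Matrix (Fin (n + 1)) (Fin (n + 1)) R}
    (hcol : ∀ i : Fin n, M i.succ 0 = 0)
    (hsub : (M.submatrix Fin.succ Fin.succ).IsUpperTriangular) : M.IsUpperTriangular := by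
  intro i j hji
  induction i using Fin.cases with
  | zero => exact absurd hji (Fin.not_lt_zero j)
  | succ i =>
    induction j using Fin.cases with
    | zero => exact hcol i
    | succ j => exact hsub (Fin.succ_lt_succ_iff.mp hji)

theorem conj_mul_apply_eq_zero_of_map_span_col_le {ι : Type*} [Fintype ι] [DecidableEq ι]
    [CommRing R] [StarRing R] {A V₁ V₂ : Matrix ι ι R} (hV₂ : V₂ ∈ unitaryGroup ι R) {j : ι}
    (hA : (R ∙ V₁.col j).map A.mulVecLin ≤ R ∙ V₂.col j) {i : ι} (hij : i ≠ j) :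
    (star V₂ * A * V₁) i j = 0 := by
  obtain ⟨α, hα⟩ := Submodule.mem_span_singleton.mp
    (hA (Submodule.mem_map_of_mem (Submodule.mem_span_singleton_self _)))
  calc (star V₂ * A * V₁) i j = (star V₂ *ᵥ (A *ᵥ V₁.col j)) i := by
        rw [← mulVec_single_one V₁, mulVec_mulVec, mulVec_mulVec, mulVec_single_one]; rfl
    _ = α * (star V₂ * V₂) i j := by
        rw [Matrix.mulVecLin_apply] at hα
        rw [← hα, mulVec_smul, ← mulVec_single_one V₂, mulVec_mulVec, mulVec_single_one]; rfl
    _ = 0 := by rw [mem_unitaryGroup_iff'.mp hV₂, one_apply_ne hij, mul_zero]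

theorem isUpperTriangular_conj_mul_blockDiagOne [CommRing R] [StarRing R]
    {A V₁ V₂ : Matrix (Fin (n + 1)) (Fin (n + 1)) R} {W₁ W₂ : Matrix (Fin n) (Fin n) R}
    (hV₂ : V₂ ∈ unitaryGroup (Fin (n + 1)) R)
    (hA : (R ∙ V₁.col 0).map A.mulVecLin ≤ R ∙ V₂.col 0)
    (hW : (star W₂ * (star V₂ * A * V₁).submatrix Fin.succ Fin.succ * W₁).IsUpperTriangular) :
    (star (V₂ * blockDiagOne W₂) * A * (V₁ * blockDiagOne W₁)).IsUpperTriangular := by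
  have hconj : star (V₂ * blockDiagOne W₂) * A * (V₁ * blockDiagOne W₁) =
      blockDiagOne (star W₂) * (star V₂ * A * V₁) * blockDiagOne W₁ := by
    simp only [star_mul, star_blockDiagOne, Matrix.mul_assoc]
  rw [hconj]
  refine isUpperTriangular_of_submatrix_succ (fun i => ?_) ?_
  · rw [blockDiagOne_mul_mul_apply_succ_zero]
    exact Finset.sum_eq_zero fun k _ => by
      rw [conj_mul_apply_eq_zero_of_map_span_col_le hV₂ hA (Fin.succ_ne_zero k), mul_zero]
  · rwa [submatrix_succ_blockDiagOne_mul_mul]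

theorem exists_mem_unitaryGroup_span_col_eq {𝕜 ι : Type*} [RCLike 𝕜] [Fintype ι] [DecidableEq ι]
    (i₀ : ι) {x : ι → 𝕜} (hx : x ≠ 0) :
    ∃ V ∈ unitaryGroup ι 𝕜, 𝕜 ∙ V.col i₀ = 𝕜 ∙ x := by
  let u : EuclideanSpace 𝕜 ι := (‖WithLp.toLp 2 x‖⁻¹ : 𝕜) • WithLp.toLp 2 x
  have hu : ‖u‖ = 1 := by
    have : WithLp.toLp 2 x ≠ 0 := by simpa using hx
    simp [u, norm_smul, this]
  obtain ⟨b, hb⟩ := Orthonormal.exists_orthonormalBasis_extension_of_card_eq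
    (v := fun _ => u) (s := {i₀}) finrank_euclideanSpace (by simpa using hu)
  refine ⟨(EuclideanSpace.basisFun ι 𝕜).toBasis.toMatrix b,
    (EuclideanSpace.basisFun ι 𝕜).toMatrix_orthonormalBasis_mem_unitary b, ?_⟩
  have hcol : ((EuclideanSpace.basisFun ι 𝕜).toBasis.toMatrix b).col i₀ =
      (‖WithLp.toLp 2 x‖⁻¹ : 𝕜) • x := by
    ext i
    simp [Module.Basis.toMatrix_apply, hb i₀ rfl, u]
  rw [hcol, Submodule.span_singleton_smul_eq]
  simpa using hx

theorem exists_unitary_isUpperTriangular_pair (n : ℕ) (A B : Matrix (Fin n) (Fin n) ℂ) :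
    ∃ U₁ ∈ unitaryGroup (Fin n) ℂ, ∃ U₂ ∈ unitaryGroup (Fin n) ℂ,
      (star U₂ * A * U₁).IsUpperTriangular ∧ (star U₁ * B * U₂).IsUpperTriangular := by
  induction n with
  | zero => exact ⟨1, one_mem _, 1, one_mem _, fun i => i.elim0, fun i => i.elim0⟩
  | succ n ih =>
    obtain ⟨x, hx, y, hy, hAxy, hByx⟩ :=
      LinearMap.exists_map_span_singleton_le_pair le_rfl A.mulVecLin B.mulVecLin
    obtain ⟨V₁, hV₁, hV₁x⟩ := exists_mem_unitaryGroup_span_col_eq 0 hx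
    obtain ⟨V₂, hV₂, hV₂y⟩ := exists_mem_unitaryGroup_span_col_eq 0 hy
    obtain ⟨W₁, hW₁, W₂, hW₂, hWA, hWB⟩ := ih ((star V₂ * A * V₁).submatrix Fin.succ Fin.succ)
      ((star V₁ * B * V₂).submatrix Fin.succ Fin.succ)
    refine ⟨V₁ * blockDiagOne W₁, mul_mem hV₁ (blockDiagOne_mem_unitaryGroup hW₁),
      V₂ * blockDiagOne W₂, mul_mem hV₂ (blockDiagOne_mem_unitaryGroup hW₂), ?_, ?_⟩
    · exact isUpperTriangular_conj_mul_blockDiagOne hV₂ (by rw [hV₁x, hV₂y]; exact hAxy) hWA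
    · exact isUpperTriangular_conj_mul_blockDiagOne hV₁ (by rw [hV₁x, hV₂y]; exact hByx) hWB

end Matrix

/-- Contragredient (period-2 cycle) complex Schur decomposition. -/
theorem complex_contragredient_schur (n : ℕ) (A B : Matrix (Fin n) (Fin n) ℂ) :
    ∃ U₁ U₂ : Matrix (Fin n) (Fin n) ℂ, U₁ᴴ * U₁ = 1 ∧ U₂ᴴ * U₂ = 1 ∧
      (∀ i j : Fin n, j < i → (U₂ᴴ * A * U₁) i j = 0) ∧
      (∀ i j : Fin n, j < i → (U₁ᴴ * B * U₂) i j = 0) := by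
  obtain ⟨U₁, hU₁, U₂, hU₂, hA, hB⟩ := exists_unitary_isUpperTriangular_pair n A B
  exact ⟨U₁, U₂, mem_unitaryGroup_iff'.mp hU₁, mem_unitaryGroup_iff'.mp hU₂,
    fun _ _ h => hA h, fun _ _ h => hB h⟩
end
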